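/- Let G be a connected δ-regular simple graph on n vertices with real adjacency matrix A and distinct eigenvalues θ_0 > θ_1 > ⋯ > θ_d, where θ_0 = δ and d ≥ 3. Let Δ = max_{u ∈ V(G)} (A³)_{uu} and τ = −(θ_0² + θ_0·θ_d − Δ)/(θ_0·(θ_d + 1)). Let θ_i be the largest eigenvalue not greater than −1, and let s be the largest index such that θ_s ≥ τ. Then n·(Δ − θ_0·(θ_d + θ_i + θ_{i−1}) − θ_d·θ_i·θ_{i−1})/((θ_0 − θ_d)·(θ_0 − θ_i)·(θ_0 − θ_{i−1})) > n·(Δ − θ_0·(θ_s + θ_{s+1} + θ_d) − θ_s·θ_{s+1}·θ_d)/((θ_0 − θ_s)·(θ_0 − θ_{s+1})·(θ_0 − θ_d)) if and only if there exists an eigenvalue μ of A with −1 < μ < τ. -/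

import Mathlib

open Matrix Finset in
lemma spectral_package {V : Type*} [Fintype V] [DecidableEq V]
    (A : Matrix V V ℝ) (hA : A.IsHermitian) :
    ∃ (lam : V → ℝ) (w : V → V → ℝ),
      (∀ u k, 0 ≤ w u k) ∧
      (∀ k, ∑ u, w u k = 1) ∧
      (∀ (m : ℕ) (u : V), (A ^ m) u u = ∑ k, lam k ^ m * w u k) ∧
      (∀ k, lam k ∈ spectrum ℝ A) ∧
      (∀ μ ∈ spectrum ℝ A, ∃ k, lam k = μ) := by
  classical
  set U : Matrix V V ℝ := (hA.eigenvectorUnitary : Matrix V V ℝ) with hUdef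
  set lam : V → ℝ := hA.eigenvalues with hlamdef
  have hUU : U * star U = 1 := (Matrix.mem_unitaryGroup_iff).mp hA.eigenvectorUnitary.2
  have hUU' : star U * U = 1 := (Matrix.mem_unitaryGroup_iff').mp hA.eigenvectorUnitary.2
  have hspec : A = U * diagonal lam * star U := by
    have := hA.spectral_theorem
    simpa using this
  have hmul : ∀ f g : V → ℝ, (U * diagonal f * star U) * (U * diagonal g * star U)
      = U * diagonal (fun k => f k * g k) * star U := by
    intro f g
    simp only [← Matrix.mul_assoc]
    rw [Matrix.mul_assoc (U * diagonal f) (star U) U, hUU', mul_one, Matrix.mul_assoc U,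
      diagonal_mul_diagonal]
  have hpow : ∀ m : ℕ, A ^ m = U * diagonal (fun k => lam k ^ m) * star U := by
    intro m; induction m with
    | zero =>
      simp only [pow_zero]
      rw [diagonal_one, mul_one, hUU]
    | succ m ih =>
      rw [pow_succ, ih, hspec, hmul]
      have he : (fun k => lam k ^ m * lam k) = fun k => lam k ^ (m + 1) := by
        funext k; ring
      rw [he]
  have hentry : ∀ (f : V → ℝ) (u : V), (U * diagonal f * star U) u u = ∑ k, f k * U u k ^ 2 := by
    intro f u
    rw [Matrix.mul_apply]
    refine Finset.sum_congr rfl fun k _ => ?_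
    rw [Matrix.mul_diagonal, Matrix.star_apply, star_trivial]
    ring
  have hdet : ∀ μ : ℝ, det (algebraMap ℝ (Matrix V V ℝ) μ - A) = ∏ k, (μ - lam k) := by
    intro μ
    have halg : algebraMap ℝ (Matrix V V ℝ) μ = U * diagonal (fun _ => μ) * star U := by
      have h1 : diagonal (fun _ : V => μ) = μ • (1 : Matrix V V ℝ) := by
        rw [smul_eq_diagonal_mul, mul_one]
      rw [h1, Matrix.mul_smul, mul_one, Matrix.smul_mul, hUU, Algebra.algebraMap_eq_smul_one]
    have h2 : algebraMap ℝ (Matrix V V ℝ) μ - A = U * diagonal (fun k => μ - lam k) * star U := by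
      rw [halg, hspec, ← sub_mul, ← Matrix.mul_sub, diagonal_sub]
    have hdetU : det U * det (star U) = 1 := by rw [← det_mul, hUU, det_one]
    rw [h2, det_mul, det_mul, det_diagonal]
    linear_combination (∏ k, (μ - lam k)) * hdetU
  refine ⟨lam, fun u k => U u k ^ 2, fun u k => sq_nonneg _, ?_, ?_, fun k => hA.eigenvalues_mem_spectrum_real k, ?_⟩
  · intro k
    have : (star U * U) k k = (1 : Matrix V V ℝ) k k := by rw [hUU']
    rw [Matrix.mul_apply] at this
    simp only [Matrix.star_apply, star_trivial, Matrix.one_apply_eq] at this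
    rw [← this]
    refine Finset.sum_congr rfl fun u _ => ?_
    ring
  · intro m u
    rw [hpow m, hentry]
  · intro μ hμ
    rw [spectrum.mem_iff] at hμ
    by_contra h
    push_neg at h
    apply hμ
    exact (Matrix.isUnit_iff_isUnit_det _).mpr (by
      rw [hdet μ]
      exact isUnit_iff_ne_zero.mpr (Finset.prod_ne_zero_iff.mpr fun k _ =>
        sub_ne_zero.mpr fun he => h k he.symm))

set_option maxHeartbeats 1000000 in
/-- **Comparison of Fiol's bound with the optimal polynomial-method bound.**
Let `G` be a connected `δ`-regular graph on `n` vertices with adjacency matrix `A` and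
distinct eigenvalues `θ 0 > θ 1 > ⋯ > θ d`, `θ 0 = δ`, `d ≥ 3`.  Let
`Δ = max_u (A^3) u u`, `τ = -(θ 0 ^ 2 + θ 0 * θ d - Δ) / (θ 0 * (θ d + 1))`,
let `θ i` be the largest eigenvalue not greater than `-1`, and let `s` be the largest
index with `θ s ≥ τ`.  Then Fiol's bound
`n * (Δ - θ 0 * (θ d + θ i + θ (i-1)) - θ d * θ i * θ (i-1)) /
  ((θ 0 - θ d) * (θ 0 - θ i) * (θ 0 - θ (i-1)))`
is strictly greater than the optimal bound
`n * (Δ - θ 0 * (θ s + θ (s+1) + θ d) - θ s * θ (s+1) * θ d) /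
  ((θ 0 - θ s) * (θ 0 - θ (s+1)) * (θ 0 - θ d))`
if and only if there exists an eigenvalue `μ` of `A` with `-1 < μ < τ`. -/
theorem fiol_bound_gt_optimal_iff {V : Type*} [Fintype V] [DecidableEq V]
    (G : SimpleGraph V) [DecidableRel G.Adj]
    (hG : G.Connected) (δ : ℕ) (hreg : G.IsRegularOfDegree δ)
    (n : ℕ) (hn : Fintype.card V = n)
    (d : ℕ) (hd : 3 ≤ d) (θ : ℕ → ℝ)
    (hmono : ∀ i j : ℕ, i < j → j ≤ d → θ j < θ i)
    (hspec : spectrum ℝ (G.adjMatrix ℝ) = {x : ℝ | ∃ i ≤ d, θ i = x})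
    (hθ0 : θ 0 = δ)
    (Δ : ℝ)
    (hΔ : IsGreatest {x : ℝ | ∃ u : V, ((G.adjMatrix ℝ) ^ 3) u u = x} Δ)
    (τ : ℝ) (hτ : τ = -(θ 0 ^ 2 + θ 0 * θ d - Δ) / (θ 0 * (θ d + 1)))
    (i : ℕ) (hi1 : 1 ≤ i) (hid : i ≤ d)
    (hi : θ i ≤ -1)
    (hilargest : ∀ t : ℕ, t < i → -1 < θ t)
    (s : ℕ) (hsd : s < d)
    (hs : θ s ≥ τ)
    (hslargest : ∀ t ≤ d, θ t ≥ τ → t ≤ s) :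
    ((n : ℝ) * (Δ - θ 0 * (θ d + θ i + θ (i - 1)) - θ d * θ i * θ (i - 1)) /
        ((θ 0 - θ d) * (θ 0 - θ i) * (θ 0 - θ (i - 1))) >
      (n : ℝ) * (Δ - θ 0 * (θ s + θ (s + 1) + θ d) - θ s * θ (s + 1) * θ d) /
        ((θ 0 - θ s) * (θ 0 - θ (s + 1)) * (θ 0 - θ d))) ↔
      ∃ μ ∈ spectrum ℝ (G.adjMatrix ℝ), -1 < μ ∧ μ < τ := by
  classical
  have hherm : (G.adjMatrix ℝ).IsHermitian := by
    apply Matrix.IsHermitian.ext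
    intro a b
    simp [SimpleGraph.adjMatrix_apply, SimpleGraph.adj_comm]
  obtain ⟨lam, w, hw0, hwsum, hpow, hlamspec, hspecsur⟩ := spectral_package (G.adjMatrix ℝ) hherm
  have hVne : Nonempty V := hG.nonempty
  have hn0 : 0 < n := hn ▸ Fintype.card_pos
  have hθmem : ∀ t, t ≤ d → θ t ∈ spectrum ℝ (G.adjMatrix ℝ) := by
    intro t ht; rw [hspec]; exact ⟨t, ht, rfl⟩
  have hlamθ : ∀ k, ∃ t, t ≤ d ∧ θ t = lam k := by
    intro k
    have h := hlamspec k
    rw [hspec] at h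
    exact h
  have hδ1 : 1 ≤ δ := by
    by_contra hcon
    push_neg at hcon
    have hδ0 : δ = 0 := by omega
    have hA0 : G.adjMatrix ℝ = 0 := by
      ext a b
      by_cases hab : G.Adj a b
      · exfalso
        have h1 : 0 < G.degree a := (G.degree_pos_iff_exists_adj a).mpr ⟨b, hab⟩
        rw [hreg a, hδ0] at h1
        exact lt_irrefl 0 h1
      · simp [hab]
    have h01 : ∀ μ : ℝ, μ ∈ spectrum ℝ (G.adjMatrix ℝ) → μ = 0 := by
      intro μ hμ
      rw [spectrum.mem_iff, hA0, sub_zero] at hμ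
      by_contra hμ0
      exact hμ (IsUnit.map (algebraMap ℝ (Matrix V V ℝ)) (isUnit_iff_ne_zero.mpr hμ0))
    have e0 := h01 (θ 0) (hθmem 0 (by omega))
    have e1 := h01 (θ 1) (hθmem 1 (by omega))
    have h2 := hmono 0 1 (by omega) (by omega)
    rw [e0, e1] at h2
    exact lt_irrefl _ h2
  have hθ0pos : (0:ℝ) < θ 0 := by
    rw [hθ0]; exact_mod_cast hδ1
  have hdiag0 : ∀ u : V, G.adjMatrix ℝ u u = 0 := fun u => by simp
  have hdiag2 : ∀ u : V, (G.adjMatrix ℝ ^ 2) u u = (δ : ℝ) := by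
    intro u
    rw [pow_two, SimpleGraph.adjMatrix_mul_self_apply_self, hreg u]
  have htr1 : ∑ k, lam k = 0 := by
    have h1 : ∑ u, (G.adjMatrix ℝ ^ 1) u u = ∑ u, ∑ k, lam k ^ 1 * w u k :=
      Finset.sum_congr rfl fun u _ => hpow 1 u
    rw [Finset.sum_comm] at h1
    simp only [pow_one] at h1
    have h2 : ∑ u, G.adjMatrix ℝ u u = (0:ℝ) := Finset.sum_eq_zero fun u _ => hdiag0 u
    calc ∑ k, lam k = ∑ k, ∑ u, lam k * w u k := by
          refine Finset.sum_congr rfl fun k _ => ?_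
          rw [← Finset.mul_sum, hwsum k, mul_one]
      _ = ∑ u, G.adjMatrix ℝ u u := h1.symm
      _ = 0 := h2
  have htr2 : ∑ k, lam k ^ 2 = (n:ℝ) * (δ:ℝ) := by
    have h1 : ∑ u, (G.adjMatrix ℝ ^ 2) u u = ∑ u, ∑ k, lam k ^ 2 * w u k :=
      Finset.sum_congr rfl fun u _ => hpow 2 u
    rw [Finset.sum_comm] at h1
    have h2 : ∑ u : V, (G.adjMatrix ℝ ^ 2) u u = (n:ℝ) * (δ:ℝ) := by
      rw [Finset.sum_congr rfl fun u _ => hdiag2 u, Finset.sum_const, Finset.card_univ, hn,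
        nsmul_eq_mul]
    calc ∑ k, lam k ^ 2 = ∑ k, ∑ u, lam k ^ 2 * w u k := by
          refine Finset.sum_congr rfl fun k _ => ?_
          rw [← Finset.mul_sum, hwsum k, mul_one]
      _ = (n:ℝ) * (δ:ℝ) := by rw [← h1]; exact h2
  have hkey : ∑ k, ((lam k - θ 0) * (lam k + 1)) = 0 := by
    have hexp : ∀ k : V, (lam k - θ 0) * (lam k + 1) = lam k ^ 2 + (1 - θ 0) * lam k - θ 0 :=
      fun k => by ring
    rw [Finset.sum_congr rfl fun k _ => hexp k]
    rw [Finset.sum_sub_distrib, Finset.sum_add_distrib, ← Finset.mul_sum, htr1, htr2,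
      Finset.sum_const, Finset.card_univ, hn, nsmul_eq_mul]
    rw [hθ0]; ring
  have hle : ∀ t₁ t₂, t₁ ≤ t₂ → t₂ ≤ d → θ t₂ ≤ θ t₁ := by
    intro t₁ t₂ h1 h2
    rcases eq_or_lt_of_le h1 with rfl | h
    · exact le_refl _
    · exact (hmono t₁ t₂ h h2).le
  have hlam_cases : ∀ k, lam k = θ 0 ∨ (lam k ≤ θ 1 ∧ θ d ≤ lam k ∧ lam k < θ 0) := by
    intro k
    obtain ⟨t, htd, hteq⟩ := hlamθ k
    rcases Nat.eq_zero_or_pos t with rfl | ht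
    · left; exact hteq.symm
    · right
      refine ⟨hteq ▸ hle 1 t ht htd, hteq ▸ hle t d htd le_rfl, hteq ▸ hmono 0 t ht htd⟩
  have hθ1 : (-1:ℝ) < θ 1 := by
    by_contra hcon
    push_neg at hcon
    have hnn : ∀ k ∈ Finset.univ, (0:ℝ) ≤ (lam k - θ 0) * (lam k + 1) := by
      intro k _
      rcases hlam_cases k with h | ⟨h1, _, h3⟩
      · rw [h]; simp
      · have e1 : lam k + 1 ≤ 0 := by linarith
        have e2 : lam k - θ 0 ≤ 0 := by linarith
        nlinarith
    have hall := (Finset.sum_eq_zero_iff_of_nonneg hnn).mp hkey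
    obtain ⟨k2, hk2⟩ := hspecsur (θ 2) (hθmem 2 (by omega))
    have h2 := hall k2 (Finset.mem_univ k2)
    rw [hk2] at h2
    have h02 := hmono 0 2 (by omega) (by omega)
    have h12 := hmono 1 2 (by omega) (by omega)
    rcases mul_eq_zero.mp h2 with h | h
    · have := sub_eq_zero.mp h; linarith
    · have : θ 2 = -1 := by linarith
      linarith
  have hθd : θ d < -1 := by
    rcases lt_or_ge (θ d) (-1) with h | h
    · exact h
    exfalso
    have hnp : ∀ k ∈ Finset.univ, (0:ℝ) ≤ -((lam k - θ 0) * (lam k + 1)) := by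
      intro k _
      rcases hlam_cases k with hh | ⟨h1, h2, h3⟩
      · rw [hh]; simp
      · nlinarith
    have hsum0 : ∑ k, -((lam k - θ 0) * (lam k + 1)) = 0 := by
      rw [Finset.sum_neg_distrib, hkey, neg_zero]
    have hall := (Finset.sum_eq_zero_iff_of_nonneg hnp).mp hsum0
    obtain ⟨k2, hk2⟩ := hspecsur (θ 2) (hθmem 2 (by omega))
    have h2 := hall k2 (Finset.mem_univ k2)
    rw [hk2] at h2
    have h2' : (θ 2 - θ 0) * (θ 2 + 1) = 0 := by linarith
    have h02 := hmono 0 2 (by omega) (by omega)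
    have h23 := hmono 2 3 (by omega) (by omega)
    have h3d := hle 3 d (by omega) le_rfl
    rcases mul_eq_zero.mp h2' with hh | hh
    · have := sub_eq_zero.mp hh; linarith
    · have : θ 2 = -1 := by linarith
      linarith
  have hi2 : 2 ≤ i := by
    rcases Nat.lt_or_ge i 2 with h | h
    · exfalso
      have hieq : i = 1 := by omega
      rw [hieq] at hi
      linarith
    · exact h
  have hΔub : Δ ≤ θ 0 * (θ 0 - 1) := by
    obtain ⟨u, hu⟩ := hΔ.1
    rw [← hu]
    have e1 : (G.adjMatrix ℝ) ^ 3 = G.adjMatrix ℝ * (G.adjMatrix ℝ * G.adjMatrix ℝ) := by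
      rw [pow_succ, pow_two, Matrix.mul_assoc]
    rw [e1, SimpleGraph.adjMatrix_mul_apply]
    have hinner : ∀ v ∈ G.neighborFinset u,
        (G.adjMatrix ℝ * G.adjMatrix ℝ) v u ≤ (δ:ℝ) - 1 := by
      intro v hv
      have huv : G.Adj u v := by rwa [SimpleGraph.mem_neighborFinset] at hv
      have hu_mem : u ∈ G.neighborFinset v := by
        rw [SimpleGraph.mem_neighborFinset]; exact huv.symm
      rw [SimpleGraph.adjMatrix_mul_apply]
      calc ∑ x ∈ G.neighborFinset v, G.adjMatrix ℝ x u
          ≤ ∑ x ∈ G.neighborFinset v, ((1:ℝ) - if x = u then 1 else 0) := by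
            refine Finset.sum_le_sum fun x _ => ?_
            by_cases hxu : x = u
            · subst hxu; simp
            · simp only [hxu, if_false, SimpleGraph.adjMatrix_apply, sub_zero]
              split <;> norm_num
        _ = (G.neighborFinset v).card - 1 := by
            rw [Finset.sum_sub_distrib, Finset.sum_const,
              Finset.sum_ite_eq' (G.neighborFinset v) u (fun _ => (1:ℝ)), if_pos hu_mem,
              nsmul_eq_mul, mul_one]
        _ = (δ:ℝ) - 1 := by
            rw [SimpleGraph.card_neighborFinset_eq_degree, hreg v]
    calc ∑ v ∈ G.neighborFinset u, (G.adjMatrix ℝ * G.adjMatrix ℝ) v u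
        ≤ ∑ _v ∈ G.neighborFinset u, ((δ:ℝ) - 1) := Finset.sum_le_sum hinner
      _ = (G.neighborFinset u).card * ((δ:ℝ) - 1) := by
          rw [Finset.sum_const, nsmul_eq_mul]
      _ = (δ:ℝ) * ((δ:ℝ) - 1) := by
          rw [SimpleGraph.card_neighborFinset_eq_degree, hreg u]
      _ ≤ θ 0 * (θ 0 - 1) := by rw [hθ0]
  have hΔlb : θ 0 * (θ 0 + θ 1 + θ d) + θ 0 * θ 1 * θ d ≤ Δ := by
    obtain ⟨u⟩ := hVne
    have h0 : ∑ k, w u k = 1 := by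
      have h := hpow 0 u
      simp only [pow_zero, Matrix.one_apply_eq, one_mul] at h
      linarith [h]
    have h1 : ∑ k, lam k * w u k = 0 := by
      have h := hpow 1 u
      simp only [pow_one] at h
      rw [hdiag0 u] at h
      linarith [h]
    have h2 : ∑ k, lam k ^ 2 * w u k = θ 0 := by
      have h := hpow 2 u
      rw [hdiag2 u] at h
      rw [hθ0]
      linarith [h]
    have h3 : (G.adjMatrix ℝ ^ 3) u u = ∑ k, lam k ^ 3 * w u k := hpow 3 u
    have hnn : ∀ k ∈ Finset.univ,
        (0:ℝ) ≤ (lam k - θ 0) * (lam k - θ 1) * (lam k - θ d) * w u k := by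
      intro k _
      rcases hlam_cases k with hh | ⟨ha, hb, hc⟩
      · rw [hh]; simp
      · have e3 : (0:ℝ) ≤ lam k - θ d := by linarith
        have e4 := hw0 u k
        have p12 : (0:ℝ) ≤ (θ 0 - lam k) * (θ 1 - lam k) :=
          mul_nonneg (by linarith) (by linarith)
        have p : (0:ℝ) ≤ (θ 0 - lam k) * (θ 1 - lam k) * (lam k - θ d) * w u k :=
          mul_nonneg (mul_nonneg p12 e3) e4
        nlinarith [p]
    have hsum : ∑ k, lam k ^ 3 * w u k =
        (∑ k, (lam k - θ 0) * (lam k - θ 1) * (lam k - θ d) * w u k)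
        + ((θ 0 + θ 1 + θ d) * (∑ k, lam k ^ 2 * w u k)
          - (θ 0 * θ 1 + θ 0 * θ d + θ 1 * θ d) * (∑ k, lam k * w u k)
          + (θ 0 * θ 1 * θ d) * (∑ k, w u k)) := by
      calc ∑ k, lam k ^ 3 * w u k
          = ∑ k, ((lam k - θ 0) * (lam k - θ 1) * (lam k - θ d) * w u k
            + ((θ 0 + θ 1 + θ d) * (lam k ^ 2 * w u k)
              - (θ 0 * θ 1 + θ 0 * θ d + θ 1 * θ d) * (lam k * w u k)
              + (θ 0 * θ 1 * θ d) * w u k)) := Finset.sum_congr rfl fun k _ => by ring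
        _ = _ := by
            rw [Finset.sum_add_distrib, Finset.sum_add_distrib, Finset.sum_sub_distrib,
              ← Finset.mul_sum, ← Finset.mul_sum, ← Finset.mul_sum]
    have hge : θ 0 * (θ 0 + θ 1 + θ d) + θ 0 * θ 1 * θ d ≤ (G.adjMatrix ℝ ^ 3) u u := by
      rw [h3, hsum, h0, h1, h2]
      have hpossum := Finset.sum_nonneg hnn
      nlinarith [hpossum]
    exact le_trans hge (hΔ.2 ⟨u, rfl⟩)
  have hP : θ 0 * (θ d + 1) < 0 := mul_neg_of_pos_of_neg hθ0pos (by linarith)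
  have hPne : θ 0 * (θ d + 1) ≠ 0 := ne_of_lt hP
  have hPτ : θ 0 * (θ d + 1) * τ = Δ - θ 0 ^ 2 - θ 0 * θ d := by
    rw [hτ]
    have hd1 : θ d + 1 ≠ 0 := by linarith
    field_simp
    ring
  have hτm1 : (-1:ℝ) ≤ τ := by nlinarith [hPτ, hΔub, hP]
  have hτθ1 : τ ≤ θ 1 := by nlinarith [hPτ, hΔlb, hP]
  have hs1 : 1 ≤ s := hslargest 1 (by omega) hτθ1
  have hτlt : ∀ t, s < t → t ≤ d → θ t < τ := by
    intro t h1 h2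
    by_contra hcon
    push_neg at hcon
    exact absurd (hslargest t h2 hcon) (by omega)
  have hpos : ∀ t, 1 ≤ t → t ≤ d → 0 < θ 0 - θ t := fun t h1 h2 => sub_pos.mpr (hmono 0 t h1 h2)
  have hDFpos : 0 < (θ 0 - θ d) * (θ 0 - θ i) * (θ 0 - θ (i-1)) :=
    mul_pos (mul_pos (hpos d (by omega) le_rfl) (hpos i (by omega) hid))
      (hpos (i-1) (by omega) (by omega))
  have hDOpos : 0 < (θ 0 - θ s) * (θ 0 - θ (s+1)) * (θ 0 - θ d) :=
    mul_pos (mul_pos (hpos s (by omega) (by omega)) (hpos (s+1) (by omega) (by omega)))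
      (hpos d (by omega) le_rfl)
  have hRHS : (∃ μ ∈ spectrum ℝ (G.adjMatrix ℝ), -1 < μ ∧ μ < τ) ↔ s + 1 < i := by
    constructor
    · rintro ⟨μ, hmem, hm1, hm2⟩
      rw [hspec] at hmem
      obtain ⟨t, htd, rfl⟩ := hmem
      have hti : t < i := by
        by_contra hcon
        push_neg at hcon
        have := hle i t hcon htd
        linarith
      have hts : s < t := by
        by_contra hcon
        push_neg at hcon
        have := hle t s hcon (by omega)
        linarith
      omega
    · intro h
      exact ⟨θ (s+1), hθmem (s+1) (by omega), hilargest (s+1) (by omega),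
        hτlt (s+1) (by omega) (by omega)⟩
  refine Iff.trans ?_ hRHS.symm
  rcases lt_trichotomy (s+1) i with hc | hc | hc
  · refine iff_of_true ?_ hc
    rw [gt_iff_lt, div_lt_div_iff₀ hDOpos hDFpos]
    have hkey2 : (n:ℝ) * (Δ - θ 0 * (θ d + θ i + θ (i-1)) - θ d * θ i * θ (i-1)) *
          ((θ 0 - θ s) * (θ 0 - θ (s+1)) * (θ 0 - θ d))
        - (n:ℝ) * (Δ - θ 0 * (θ s + θ (s+1) + θ d) - θ s * θ (s+1) * θ d) *
          ((θ 0 - θ d) * (θ 0 - θ i) * (θ 0 - θ (i-1)))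
        = (n:ℝ) * (θ 0 - θ d) * ((θ 0 * (θ d + 1)) * (τ - θ i) * (θ (i-1) - θ (s+1)) * (θ 0 - θ s)
          + (θ 0 * (θ d + 1)) * (τ - θ (s+1)) * (θ i - θ s) * (θ 0 - θ (i-1))) := by
      linear_combination
        (-((n:ℝ) * (θ 0 - θ d) * ((θ (i-1) - θ (s+1)) * (θ 0 - θ s) + (θ i - θ s) * (θ 0 - θ (i-1))))) * hPτ
    have hterm1 : 0 ≤ (θ 0 * (θ d + 1)) * (τ - θ i) * (θ (i-1) - θ (s+1)) * (θ 0 - θ s) := by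
      have e1 : θ i < τ := hτlt i (by omega) hid
      have e2 : θ (i-1) ≤ θ (s+1) := hle (s+1) (i-1) (by omega) (by omega)
      have e3 : 0 < θ 0 - θ s := hpos s (by omega) (by omega)
      have m1 : θ 0 * (θ d + 1) * (τ - θ i) < 0 := mul_neg_of_neg_of_pos hP (by linarith)
      have m2 : 0 ≤ θ 0 * (θ d + 1) * (τ - θ i) * (θ (i-1) - θ (s+1)) := by nlinarith [m1]
      exact mul_nonneg m2 e3.le
    have hterm2 : 0 < (θ 0 * (θ d + 1)) * (τ - θ (s+1)) * (θ i - θ s) * (θ 0 - θ (i-1)) := by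
      have e1 : θ (s+1) < τ := hτlt (s+1) (by omega) (by omega)
      have e2 : θ i < θ s := hmono s i (by omega) hid
      have e3 : 0 < θ 0 - θ (i-1) := hpos (i-1) (by omega) (by omega)
      have m1 : θ 0 * (θ d + 1) * (τ - θ (s+1)) < 0 := mul_neg_of_neg_of_pos hP (by linarith)
      have m2 : 0 < θ 0 * (θ d + 1) * (τ - θ (s+1)) * (θ i - θ s) :=
        mul_pos_of_neg_of_neg m1 (by linarith)
      exact mul_pos m2 e3
    have hnpos : (0:ℝ) < n := by exact_mod_cast hn0
    have hfac : 0 < (n:ℝ) * (θ 0 - θ d) := mul_pos hnpos (hpos d (by omega) le_rfl)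
    have hprod : 0 < (n:ℝ) * (θ 0 - θ d) * ((θ 0 * (θ d + 1)) * (τ - θ i) * (θ (i-1) - θ (s+1)) * (θ 0 - θ s)
          + (θ 0 * (θ d + 1)) * (τ - θ (s+1)) * (θ i - θ s) * (θ 0 - θ (i-1))) :=
      mul_pos hfac (by linarith)
    linarith [hkey2, hprod]
  · subst hc
    simp only [Nat.add_sub_cancel]
    have e1 : Δ - θ 0 * (θ d + θ (s+1) + θ s) - θ d * θ (s+1) * θ s
        = Δ - θ 0 * (θ s + θ (s+1) + θ d) - θ s * θ (s+1) * θ d := by ring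
    have e2 : (θ 0 - θ d) * (θ 0 - θ (s+1)) * (θ 0 - θ s)
        = (θ 0 - θ s) * (θ 0 - θ (s+1)) * (θ 0 - θ d) := by ring
    rw [e1, e2]
    simp
  · have hsi : s = i := by
      rcases Nat.lt_or_ge i s with h | h
      · exfalso
        have := hmono i s h (by omega)
        linarith
      · omega
    have hθsi : θ s = θ i := by rw [hsi]
    have hτval : τ = θ i := by
      rw [← hθsi]
      have h1 : θ s ≤ -1 := hθsi ▸ hi
      linarith [hs, hτm1]
    have hΔval : Δ = θ 0 ^ 2 + θ 0 * θ d + θ 0 * (θ d + 1) * θ i := by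
      rw [hτval] at hPτ
      linarith [hPτ]
    have heq : (n:ℝ) * (Δ - θ 0 * (θ d + θ i + θ (i-1)) - θ d * θ i * θ (i-1)) /
          ((θ 0 - θ d) * (θ 0 - θ i) * (θ 0 - θ (i-1)))
        = (n:ℝ) * (Δ - θ 0 * (θ s + θ (s+1) + θ d) - θ s * θ (s+1) * θ d) /
          ((θ 0 - θ s) * (θ 0 - θ (s+1)) * (θ 0 - θ d)) := by
      rw [div_eq_div_iff (ne_of_gt hDFpos) (ne_of_gt hDOpos)]
      rw [hΔval, hθsi]
      ring
    rw [heq]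
    simp only [gt_iff_lt, lt_self_iff_false, false_iff]
    omega
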